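/- Let S be a Polish space, c : S × S → [0,∞) satisfy condition (★), (Ω, 𝒜, P) a probability space, ℳ a sub-σ-algebra of 𝒜, and X an S-valued random variable with ∫ c(x, x₀) dP_X(x) < ∞ for some x₀ ∈ S. Then for any x ∈ S, τ_c(ℳ, X) ≤ 2 ∫_0^{β(ℳ, σ(X))} Q_{c(X,x)}(u) du, where Q_{c(X,x)} is the generalized inverse of t ↦ P(c(X,x) > t). In particular, if c is bounded by M, then τ_c(ℳ, X) ≤ 2M · β(ℳ, σ(X)). -/

import Mathlib

open MeasureTheory ProbabilityTheory ENNReal Set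

noncomputable section

/-- The `μ`-completion of the σ-algebra `m`. -/
def muCompletion {α : Type*} (m : MeasurableSpace α) (μ : @Measure α m) : MeasurableSpace α :=
  letI := m
  inferInstanceAs (MeasurableSpace (MeasureTheory.NullMeasurableSpace α μ))

/-- The universal completion of a σ-algebra: the intersection of the `μ`-completions
over all finite nonnegative measures `μ`. -/
def univCompletion {α : Type*} (m : MeasurableSpace α) : MeasurableSpace α :=
  ⨅ (μ : @Measure α m) (_ : @IsFiniteMeasure α m μ), muCompletion m μ

/-- `Lip_c`: bounded continuous functions `u : S → ℝ` with `|u x - u y| ≤ c x y`. -/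
def LipC {S : Type*} [TopologicalSpace S] (c : S → S → ℝ) : Set (S → ℝ) :=
  {u | Continuous u ∧ (∃ M, ∀ x, |u x| ≤ M) ∧ ∀ x y, |u x - u y| ≤ c x y}

/-- Condition (★): `c x y = sup_{u ∈ Lip_c} |u x - u y|` for all `x, y`. -/
def StarCond {S : Type*} [TopologicalSpace S] (c : S → S → ℝ) : Prop :=
  ∀ x y, c x y = sSup {r : ℝ | ∃ u ∈ LipC c, r = |u x - u y|}

/-- `D(μ,ν)`: couplings of `μ` and `ν`, i.e. probability measures on `S × S`
with first margin `μ` and second margin `ν`. -/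
def Couplings {S : Type*} [MeasurableSpace S] (μ ν : Measure S) : Set (Measure (S × S)) :=
  {π | IsProbabilityMeasure π ∧ π.map Prod.fst = μ ∧ π.map Prod.snd = ν}

/-- The Kantorovich–Rubinštein functional `KR_c(μ,ν)`. -/
def KR {S : Type*} [MeasurableSpace S] (c : S → S → ℝ) (μ ν : Measure S) : ℝ≥0∞ :=
  ⨅ π ∈ Couplings μ ν, ∫⁻ p, ENNReal.ofReal (c p.1 p.2) ∂π

/-- The dual functional `ℓ_c(μ,ν) = sup_{f ∈ Lip_c} |∫ f dμ - ∫ f dν|`. -/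
def lipDist {S : Type*} [TopologicalSpace S] [MeasurableSpace S] (c : S → S → ℝ)
    (μ ν : Measure S) : ℝ≥0∞ :=
  ⨆ u ∈ LipC c, ENNReal.ofReal |∫ x, u x ∂μ - ∫ x, u x ∂ν|

/-- Regular conditional distribution of `Z` given the sub-σ-algebra `M`. -/
def IsRCD {Ω S : Type*} {mΩ : MeasurableSpace Ω} [MeasurableSpace S]
    (P : @Measure Ω mΩ) (M : MeasurableSpace Ω) (Z : Ω → S) (κ : Ω → Measure S) : Prop :=
  letI := mΩ
  (∀ ω, IsProbabilityMeasure (κ ω)) ∧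
  (∀ B : Set S, MeasurableSet B → Measurable[M] (fun ω => κ ω B)) ∧
  (∀ A : Set Ω, MeasurableSet[M] A → ∀ B : Set S, MeasurableSet B →
    P (A ∩ Z ⁻¹' B) = ∫⁻ ω in A, κ ω B ∂P)

/-- The law `P_X` of a random variable. -/
def law {Ω S : Type*} {mΩ : MeasurableSpace Ω} [MeasurableSpace S]
    (P : @Measure Ω mΩ) (X : Ω → S) : Measure S :=
  letI := mΩ
  P.map X

/-- The dependence coefficient `τ_c(ℳ, X)`, expressed through a given regular
conditional distribution `κ` of `X` given `ℳ`. -/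
def tauC {Ω S : Type*} {mΩ : MeasurableSpace Ω} [TopologicalSpace S] [MeasurableSpace S]
    (c : S → S → ℝ) (P : @Measure Ω mΩ) (κ : Ω → Measure S) (X : Ω → S) : ℝ≥0∞ :=
  letI := mΩ
  ∫⁻ ω, ⨆ u ∈ LipC c, ENNReal.ofReal |∫ x, u x ∂(κ ω) - ∫ x, u x ∂(law P X)| ∂P

/-- The total variation norm `‖μ - ν‖_v` of the difference of two finite measures. -/
def tvDist {α : Type*} [MeasurableSpace α] (μ ν : Measure α) : ℝ≥0∞ :=
  (μ - ν) Set.univ + (ν - μ) Set.univ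

/-- The `β`-mixing coefficient `β(ℳ, σ(X)) = ½ E[‖P_{X|ℳ} - P_X‖_v]`, expressed
through a given regular conditional distribution `κ` of `X` given `ℳ`. -/
def betaMix {Ω S : Type*} {mΩ : MeasurableSpace Ω} [MeasurableSpace S]
    (P : @Measure Ω mΩ) (κ : Ω → Measure S) (X : Ω → S) : ℝ≥0∞ :=
  letI := mΩ
  (∫⁻ ω, tvDist (κ ω) (law P X) ∂P) / 2

/-- The generalized (càdlàg) inverse `Q_Z` of the tail function `t ↦ P(Z > t)` of a
nonnegative random variable `Z`. -/
def tailInv {Ω : Type*} {mΩ : MeasurableSpace Ω} (P : @Measure Ω mΩ) (Z : Ω → ℝ)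
    (u : ℝ) : ℝ :=
  sInf {t : ℝ | 0 ≤ t ∧ P {ω | t < Z ω} ≤ ENNReal.ofReal u}

/-!
For `u ∈ Lip_c` and a level `T`, `|u - u x| ≤ c(·, x) ≤ T + (c(·, x) - T)⁺`. Against
`P_{X|ℳ} - P_X`, the part below `T` is paid for by the total variation and the part above `T` by
the integrals of `(c(·, x) - T)⁺` under both measures; since `P_{X|ℳ}` averages to `P_X`,
integrating in `ω` gives `τ_c ≤ 2 (T β + E (c(X, x) - T)⁺)`. For `T = Q(β)` the right-hand side is
at most `2 ∫₀^∞ min(β, P(c(X, x) > t)) dt`, which equals `2 ∫₀^β Q` by Fubini, because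
`t < Q(u) ↔ u < P(c(X, x) > t)` away from the endpoint. For `β = 0` let `T → ∞` instead.
-/

namespace MeasureTheory.Measure

variable {α : Type*} [MeasurableSpace α] {μ ν : Measure α} [IsFiniteMeasure μ] [IsFiniteMeasure ν]

theorem add_sub_eq_add_sub_rev : μ + (ν - μ) = ν + (μ - ν) := by
  have h := sub_toSignedMeasure_eq_toSignedMeasure_sub (μ := μ) (ν := ν)
  rw [sub_eq_sub_iff_add_eq_add, ← toSignedMeasure_add, ← toSignedMeasure_add,
    toSignedMeasure_eq_toSignedMeasure_iff] at h
  rw [h, add_comm]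

theorem integral_sub_integral_eq {f : α → ℝ} (hμ : Integrable f μ) (hν : Integrable f ν) :
    ∫ x, f x ∂μ - ∫ x, f x ∂ν = ∫ x, f x ∂(μ - ν) - ∫ x, f x ∂(ν - μ) := by
  have h := congrArg (fun ρ => ∫ x, f x ∂ρ) (add_sub_eq_add_sub_rev (μ := μ) (ν := ν))
  rw [integral_add_measure hμ (hν.mono_measure sub_le),
    integral_add_measure hν (hμ.mono_measure sub_le)] at h
  linarith

theorem ofReal_abs_integral_sub_le_tvDist {f : α → ℝ} (hμ : Integrable f μ) (hν : Integrable f ν)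
    {T : ℝ} {g : α → ℝ≥0∞} (hfg : ∀ x, ENNReal.ofReal |f x| ≤ ENNReal.ofReal T + g x) :
    ENNReal.ofReal |∫ x, f x ∂μ - ∫ x, f x ∂ν| ≤
      ENNReal.ofReal T * tvDist μ ν + ∫⁻ x, g x ∂μ + ∫⁻ x, g x ∂ν := by
  have hpart : ∀ ρ ρ' : Measure α, ρ ≤ ρ' →
      ENNReal.ofReal |∫ x, f x ∂ρ| ≤ ENNReal.ofReal T * ρ univ + ∫⁻ x, g x ∂ρ' := fun ρ ρ' hρ =>
    calc ENNReal.ofReal |∫ x, f x ∂ρ|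
        ≤ ∫⁻ x, ENNReal.ofReal |f x| ∂ρ := by
          simpa only [Real.enorm_eq_ofReal_abs] using enorm_integral_le_lintegral_enorm f
      _ ≤ ∫⁻ x, (ENNReal.ofReal T + g x) ∂ρ := lintegral_mono hfg
      _ = ENNReal.ofReal T * ρ univ + ∫⁻ x, g x ∂ρ := by
          rw [lintegral_add_left measurable_const, lintegral_const, mul_comm]
      _ ≤ ENNReal.ofReal T * ρ univ + ∫⁻ x, g x ∂ρ' := by gcongr
  calc ENNReal.ofReal |∫ x, f x ∂μ - ∫ x, f x ∂ν|
      = ENNReal.ofReal |∫ x, f x ∂(μ - ν) - ∫ x, f x ∂(ν - μ)| := by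
        rw [integral_sub_integral_eq hμ hν]
    _ ≤ ENNReal.ofReal |∫ x, f x ∂(μ - ν)| + ENNReal.ofReal |∫ x, f x ∂(ν - μ)| :=
        (ENNReal.ofReal_le_ofReal (abs_sub _ _)).trans ENNReal.ofReal_add_le
    _ ≤ (ENNReal.ofReal T * (μ - ν) univ + ∫⁻ x, g x ∂μ) +
          (ENNReal.ofReal T * (ν - μ) univ + ∫⁻ x, g x ∂ν) :=
        add_le_add (hpart _ _ sub_le) (hpart _ _ sub_le)
    _ = ENNReal.ofReal T * tvDist μ ν + ∫⁻ x, g x ∂μ + ∫⁻ x, g x ∂ν := by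
        rw [tvDist]; ring

end MeasureTheory.Measure

theorem tvDist_le {α : Type*} [MeasurableSpace α] (μ ν : Measure α) :
    tvDist μ ν ≤ μ univ + ν univ :=
  add_le_add (Measure.sub_le (μ := μ) (ν := ν) _) (Measure.sub_le (μ := ν) (ν := μ) _)

theorem lipDist_le_truncation {S : Type*} [TopologicalSpace S] [MeasurableSpace S]
    [OpensMeasurableSpace S] (c : S → S → ℝ) (μ ν : Measure S) [IsProbabilityMeasure μ]
    [IsProbabilityMeasure ν] (x : S) (T : ℝ) :
    lipDist c μ ν ≤ ENNReal.ofReal T * tvDist μ ν + ∫⁻ y, ENNReal.ofReal (c y x - T) ∂μ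
      + ∫⁻ y, ENNReal.ofReal (c y x - T) ∂ν := by
  refine iSup₂_le fun u ⟨hcont, ⟨B, hB⟩, hlip⟩ => ?_
  have hint : ∀ ρ : Measure S, IsProbabilityMeasure ρ → Integrable u ρ := fun ρ _ =>
    .of_bound hcont.aestronglyMeasurable B (ae_of_all _ hB)
  have hshift : ∀ ρ : Measure S, IsProbabilityMeasure ρ →
      ∫ y, u y ∂ρ = ∫ y, (u y - u x) ∂ρ + u x := fun ρ hρ => by
    rw [integral_sub (hint ρ hρ) (integrable_const _), integral_const, probReal_univ]
    simp
  rw [hshift μ inferInstance, hshift ν inferInstance, add_sub_add_right_eq_sub]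
  refine Measure.ofReal_abs_integral_sub_le_tvDist ((hint μ inferInstance).sub (integrable_const _))
    ((hint ν inferInstance).sub (integrable_const _)) fun y => ?_
  calc ENNReal.ofReal |u y - u x| ≤ ENNReal.ofReal (T + (c y x - T)) :=
        ENNReal.ofReal_le_ofReal (by simpa using hlip y x)
    _ ≤ ENNReal.ofReal T + ENNReal.ofReal (c y x - T) := ENNReal.ofReal_add_le

section RegularConditionalDistribution

variable {Ω S : Type*} {mΩ : MeasurableSpace Ω} [MeasurableSpace S] {P : Measure Ω}
  {X : Ω → S} {κ : Ω → Measure S}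

theorem IsRCD.measurable {M : MeasurableSpace Ω} (h : IsRCD P M X κ) (hM : M ≤ mΩ) :
    Measurable[mΩ] κ :=
  Measure.measurable_of_measurable_coe _ fun s hs => (h.2.1 s hs).mono hM le_rfl

theorem IsRCD.bind_eq_law (hX : Measurable X) {M : MeasurableSpace Ω} (h : IsRCD P M X κ)
    (hM : M ≤ mΩ) : P.bind κ = law P X := by
  ext s hs
  rw [Measure.bind_apply hs (h.measurable hM).aemeasurable, law, Measure.map_apply hX hs,
    ← Set.univ_inter (X ⁻¹' s), h.2.2 _ (@MeasurableSet.univ Ω M) s hs, Measure.restrict_univ]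

theorem IsRCD.lintegral_lintegral (hX : Measurable X) {M : MeasurableSpace Ω}
    (h : IsRCD P M X κ) (hM : M ≤ mΩ) {g : S → ℝ≥0∞} (hg : Measurable g) :
    ∫⁻ ω, ∫⁻ y, g y ∂(κ ω) ∂P = ∫⁻ y, g y ∂(law P X) := by
  rw [← h.bind_eq_law hX hM, Measure.lintegral_bind (h.measurable hM).aemeasurable
    hg.aemeasurable]

theorem betaMix_le_one [IsProbabilityMeasure P] (hκ : ∀ ω, IsProbabilityMeasure (κ ω))
    (hX : Measurable X) : betaMix P κ X ≤ 1 := by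
  have : IsProbabilityMeasure (law P X) := Measure.isProbabilityMeasure_map hX.aemeasurable
  have htv : ∀ ω, tvDist (κ ω) (law P X) ≤ 2 := fun ω => by
    simpa [one_add_one_eq_two] using tvDist_le (κ ω) (law P X)
  calc betaMix P κ X ≤ (∫⁻ _, 2 ∂P) / 2 := by unfold betaMix; gcongr; exact htv _
    _ = 1 := by simp [ENNReal.div_self]

theorem tauC_le_truncation [TopologicalSpace S] [OpensMeasurableSpace S]
    [IsProbabilityMeasure P] (c : S → S → ℝ) {x : S} (hc : Measurable fun y => c y x)
    (hX : Measurable X) {M : MeasurableSpace Ω} (h : IsRCD P M X κ) (hM : M ≤ mΩ) (T : ℝ) :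
    tauC c P κ X ≤
      2 * (ENNReal.ofReal T * betaMix P κ X + ∫⁻ ω, ENNReal.ofReal (c (X ω) x - T) ∂P) := by
  set G : S → ℝ≥0∞ := fun y => ENNReal.ofReal (c y x - T)
  have hG : Measurable G := (hc.sub measurable_const).ennreal_ofReal
  have := h.1
  have hκ := h.measurable hM
  have hGdisint := h.lintegral_lintegral hX hM hG
  -- `M` is a second `MeasurableSpace Ω` in context; once it is gone, instances resolve to `mΩ`.
  clear h hM M
  have : IsProbabilityMeasure (law P X) := Measure.isProbabilityMeasure_map hX.aemeasurable
  have hGκ : Measurable fun ω => ∫⁻ y, G y ∂(κ ω) :=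
    (Measure.measurable_lintegral hG).comp hκ
  have hGlaw : ∫⁻ y, G y ∂(law P X) = ∫⁻ ω, ENNReal.ofReal (c (X ω) x - T) ∂P :=
    lintegral_map hG hX
  calc tauC c P κ X = ∫⁻ ω, lipDist c (κ ω) (law P X) ∂P := rfl
    _ ≤ ∫⁻ ω, (ENNReal.ofReal T * tvDist (κ ω) (law P X)
          + (∫⁻ y, G y ∂(κ ω) + ∫⁻ y, G y ∂(law P X))) ∂P :=
        lintegral_mono fun ω => (lipDist_le_truncation c _ _ x T).trans_eq (add_assoc _ _ _)
    _ = ENNReal.ofReal T * (2 * betaMix P κ X) + 2 * ∫⁻ y, G y ∂(law P X) := by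
        rw [lintegral_add_right _ (hGκ.add_const _), lintegral_const_mul' _ _ ofReal_ne_top,
          lintegral_add_right _ measurable_const, hGdisint, lintegral_const,
          measure_univ, mul_one, ← two_mul, betaMix,
          ENNReal.mul_div_cancel two_ne_zero ofNat_ne_top]
    _ = 2 * (ENNReal.ofReal T * betaMix P κ X + ∫⁻ ω, ENNReal.ofReal (c (X ω) x - T) ∂P) := by
        rw [hGlaw]; ring

end RegularConditionalDistribution

namespace StarCond

variable {S : Type*} [TopologicalSpace S] {c : S → S → ℝ}

theorem nonneg (h : StarCond c) (x y : S) : 0 ≤ c x y :=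
  h x y ▸ Real.sSup_nonneg (by rintro _ ⟨u, -, rfl⟩; exact abs_nonneg _)

theorem le_add (h : StarCond c) (x y z : S) : c x z ≤ c x y + c y z := by
  rw [h x z]
  refine Real.sSup_le ?_ (add_nonneg (h.nonneg x y) (h.nonneg y z))
  rintro _ ⟨u, hu, rfl⟩
  exact (abs_sub_le _ _ _).trans (add_le_add (hu.2.2 x y) (hu.2.2 y z))

theorem lowerSemicontinuous (h : StarCond c) (z : S) : LowerSemicontinuous fun y => c y z := by
  intro y r hr
  have hzero : (fun _ => (0 : ℝ)) ∈ LipC c :=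
    ⟨continuous_const, ⟨0, by simp⟩, by simpa using h.nonneg⟩
  replace hr : r < c y z := hr
  rw [h y z] at hr
  obtain ⟨_, ⟨u, hu, rfl⟩, hru⟩ :=
    exists_lt_of_lt_csSup (s := {r : ℝ | ∃ u ∈ LipC c, r = |u y - u z|}) ⟨_, _, hzero, rfl⟩ hr
  filter_upwards [continuousAt_const.eventually_lt
    ((hu.1.sub continuous_const).abs.continuousAt) hru] with y' hy'
  exact hy'.trans_le (hu.2.2 y' z)

theorem lintegral_lt_top [MeasurableSpace S] (h : StarCond c) {ν : Measure S}
    [IsFiniteMeasure ν] {x₀ : S} (hx₀ : ∫⁻ y, ENNReal.ofReal (c y x₀) ∂ν < ⊤) (x : S) :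
    ∫⁻ y, ENNReal.ofReal (c y x) ∂ν < ⊤ :=
  calc ∫⁻ y, ENNReal.ofReal (c y x) ∂ν
      ≤ ∫⁻ y, (ENNReal.ofReal (c y x₀) + ENNReal.ofReal (c x₀ x)) ∂ν :=
        lintegral_mono fun y => (ENNReal.ofReal_le_ofReal (h.le_add y x₀ x)).trans
          ENNReal.ofReal_add_le
    _ = ∫⁻ y, ENNReal.ofReal (c y x₀) ∂ν + ENNReal.ofReal (c x₀ x) * ν univ := by
        rw [lintegral_add_right _ measurable_const, lintegral_const]
    _ < ⊤ := ENNReal.add_lt_top.2 ⟨hx₀, ENNReal.mul_lt_top ofReal_lt_top (measure_lt_top _ _)⟩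

end StarCond

section TailInverse

variable {α : Type*} [MeasurableSpace α] {μ : Measure α} {Z : α → ℝ}

theorem tailInv_nonneg (u : ℝ) : 0 ≤ tailInv μ Z u :=
  Real.sInf_nonneg fun _ ht => ht.1

theorem lt_measure_lt_of_lt_tailInv {u t : ℝ} (ht : 0 ≤ t) (h : t < tailInv μ Z u) :
    ENNReal.ofReal u < μ {ω | t < Z ω} := by
  by_contra! h'
  exact h.not_ge (csInf_le ⟨0, fun _ hs => hs.1⟩ ⟨ht, h'⟩)

theorem lintegral_ofReal_sub_eq_lintegral_meas_lt (hZ : Measurable Z) (T : ℝ) :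
    ∫⁻ ω, ENNReal.ofReal (Z ω - T) ∂μ = ∫⁻ t in Ioi T, μ {ω | t < Z ω} := by
  have hlevel : ∀ s ∈ Ioi (0 : ℝ), μ {ω | s < max (Z ω - T) 0} = μ {ω | s + T < Z ω} :=
    fun s hs => by
      congr 1
      ext ω
      simp only [mem_ofPred_eq, lt_max_iff, lt_sub_iff_add_lt]
      exact or_iff_left (not_lt.2 (le_of_lt hs))
  calc ∫⁻ ω, ENNReal.ofReal (Z ω - T) ∂μ = ∫⁻ ω, ENNReal.ofReal (max (Z ω - T) 0) ∂μ := by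
        refine lintegral_congr fun ω => ?_
        rw [ENNReal.ofReal_max, ENNReal.ofReal_zero, max_zero]
    _ = ∫⁻ s in Ioi 0, μ {ω | s + T < Z ω} := by
        rw [lintegral_eq_lintegral_meas_lt (f := fun ω => max (Z ω - T) 0) μ
          (ae_of_all _ fun _ => le_max_right _ _)
          ((hZ.sub_const T).max measurable_const).aemeasurable,
          setLIntegral_congr_fun measurableSet_Ioi hlevel]
    _ = ∫⁻ s in (· + T) ⁻¹' Ioi T, μ {ω | s + T < Z ω} := by
        rw [preimage_add_const_Ioi, sub_self]
    _ = ∫⁻ t in Ioi T, μ {ω | t < Z ω} :=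
        (measurePreserving_add_right volume T).setLIntegral_comp_preimage_emb
          (measurableEmbedding_addRight T) (fun t => μ {ω | t < Z ω}) (Ioi T)

theorem iInf_lintegral_ofReal_sub_natCast (hZ : Measurable Z)
    (hfin : ∫⁻ ω, ENNReal.ofReal (Z ω) ∂μ ≠ ⊤) :
    ⨅ n : ℕ, ∫⁻ ω, ENNReal.ofReal (Z ω - n) ∂μ = 0 := by
  rw [← lintegral_iInf (fun n => (hZ.sub_const _).ennreal_ofReal)
    (fun m n hmn ω => ENNReal.ofReal_le_ofReal (by gcongr)) (by simpa using hfin)]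
  have hzero : ∀ ω, ⨅ n : ℕ, ENNReal.ofReal (Z ω - n) = 0 := fun ω =>
    let ⟨n, hn⟩ := exists_nat_ge (Z ω)
    nonpos_iff_eq_zero.1 ((iInf_le _ n).trans_eq (ENNReal.ofReal_of_nonpos (sub_nonpos.2 hn)))
  simp [hzero]

variable [IsFiniteMeasure μ]

theorem exists_measure_lt_le (hZ : Measurable Z) {u : ℝ} (hu : 0 < u) :
    ∃ t, 0 ≤ t ∧ μ {ω | t < Z ω} ≤ ENNReal.ofReal u := by
  have hlim : Filter.Tendsto (fun t : ℝ => μ {ω | t < Z ω}) Filter.atTop (nhds 0) := by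
    have h := tendsto_measure_iInter_atTop (μ := μ) (s := fun t : ℝ => {ω | t < Z ω})
      (fun t => (measurableSet_lt measurable_const hZ).nullMeasurableSet)
      (fun s t hst ω hω => hst.trans_lt hω) ⟨0, measure_ne_top _ _⟩
    rwa [Set.iInter_eq_empty_iff.2 fun ω => ⟨Z ω, lt_irrefl (Z ω)⟩, measure_empty] at h
  obtain ⟨t, ht⟩ := ((hlim.eventually (ge_mem_nhds (ENNReal.ofReal_pos.2 hu))).and
    (Filter.eventually_ge_atTop 0)).exists
  exact ⟨t, ht.2, ht.1⟩

theorem measure_lt_le_of_tailInv_lt (hZ : Measurable Z) {u t : ℝ} (hu : 0 < u)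
    (h : tailInv μ Z u < t) : μ {ω | t < Z ω} ≤ ENNReal.ofReal u := by
  obtain ⟨s, hs, hst⟩ := exists_lt_of_csInf_lt (exists_measure_lt_le hZ hu) h
  exact (measure_mono fun ω hω => hst.trans hω).trans hs.2

theorem antitoneOn_tailInv (hZ : Measurable Z) : AntitoneOn (tailInv μ Z) (Ioi 0) :=
  fun _ hu _ _ huv => csInf_le_csInf ⟨0, fun _ hs => hs.1⟩ (exists_measure_lt_le hZ hu)
    fun _ ht => ⟨ht.1, ht.2.trans (ENNReal.ofReal_le_ofReal huv)⟩

theorem volume_tail_gt_eq_tailInv (hZ : Measurable Z) {u : ℝ} (hu : 0 < u) :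
    volume ({t | ENNReal.ofReal u < μ {ω | t < Z ω}} ∩ Ioi 0) = ENNReal.ofReal (tailInv μ Z u) := by
  have hsub : {t | ENNReal.ofReal u < μ {ω | t < Z ω}} ∩ Ioi 0 ⊆ Ioc 0 (tailInv μ Z u) :=
    fun t ht => ⟨ht.2, not_lt.1 fun h => (measure_lt_le_of_tailInv_lt hZ hu h).not_gt ht.1⟩
  have hsup : Ioo 0 (tailInv μ Z u) ⊆ {t | ENNReal.ofReal u < μ {ω | t < Z ω}} ∩ Ioi 0 :=
    fun t ht => ⟨lt_measure_lt_of_lt_tailInv ht.1.le ht.2, ht.1⟩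
  refine le_antisymm ((measure_mono hsub).trans_eq ?_) ((measure_mono hsup).trans_eq' ?_) <;>
    simp

/-- Both sides are the area of `{(u, t) | 0 < u < b, 0 < t, u < μ {t < Z}}`, sliced in `t`
on the left and in `u` on the right. -/
theorem lintegral_tailInv (hZ : Measurable Z) (b : ℝ) :
    ∫⁻ u in Ioo 0 b, ENNReal.ofReal (tailInv μ Z u) =
      ∫⁻ t in Ioi 0, min (ENNReal.ofReal b) (μ {ω | t < Z ω}) := by
  set H : ℝ → ℝ≥0∞ := fun t => μ {ω | t < Z ω}
  have hH : Measurable H := Antitone.measurable fun s t hst => measure_mono fun ω hω =>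
    hst.trans_lt hω
  set W : Set (ℝ × ℝ) := {p | ENNReal.ofReal p.1 < H p.2}
  have hW : MeasurableSet W :=
    measurableSet_lt (ENNReal.measurable_ofReal.comp measurable_fst) (hH.comp measurable_snd)
  have hsection : ∀ t, {u | ENNReal.ofReal u < H t} ∩ Ioo 0 b = Ioo 0 (min b (H t).toReal) := by
    intro t
    ext u
    simp only [mem_inter_iff, mem_ofPred_eq, mem_Ioo, lt_min_iff]
    constructor
    · rintro ⟨h, hu, hub⟩
      exact ⟨hu, hub, (ENNReal.ofReal_lt_iff_lt_toReal hu.le (measure_ne_top _ _)).1 h⟩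
    · rintro ⟨hu, hub, h⟩
      exact ⟨(ENNReal.ofReal_lt_iff_lt_toReal hu.le (measure_ne_top _ _)).2 h, hu, hub⟩
  calc ∫⁻ u in Ioo 0 b, ENNReal.ofReal (tailInv μ Z u)
      = ∫⁻ u in Ioo 0 b, volume.restrict (Ioi 0) (Prod.mk u ⁻¹' W) := by
        refine setLIntegral_congr_fun measurableSet_Ioo fun u hu => ?_
        rw [Measure.restrict_apply (measurable_prodMk_left hW),
          ← volume_tail_gt_eq_tailInv hZ hu.1]
        rfl
    _ = (volume.restrict (Ioo 0 b)).prod (volume.restrict (Ioi 0)) W :=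
        (Measure.prod_apply hW).symm
    _ = ∫⁻ t in Ioi 0, volume.restrict (Ioo 0 b) ((fun u => (u, t)) ⁻¹' W) :=
        Measure.prod_apply_symm hW
    _ = ∫⁻ t in Ioi 0, min (ENNReal.ofReal b) (H t) := by
        refine lintegral_congr fun t => ?_
        rw [Measure.restrict_apply (measurable_prodMk_right hW)]
        change volume ({u | ENNReal.ofReal u < H t} ∩ Ioo 0 b) = _
        rw [hsection, Real.volume_Ioo, sub_zero, ENNReal.ofReal_min,
          ENNReal.ofReal_toReal (measure_ne_top _ _)]

theorem truncation_le_lintegral_min (hZ : Measurable Z) {b : ℝ} (hb : 0 < b) :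
    ENNReal.ofReal (tailInv μ Z b) * ENNReal.ofReal b + ∫⁻ t in Ioi (tailInv μ Z b), μ {ω | t < Z ω}
      ≤ ∫⁻ t in Ioi 0, min (ENNReal.ofReal b) (μ {ω | t < Z ω}) := by
  set T := tailInv μ Z b
  have hlow : ∀ t ∈ Ioo 0 T, min (ENNReal.ofReal b) (μ {ω | t < Z ω}) = ENNReal.ofReal b :=
    fun t ht => min_eq_left (lt_measure_lt_of_lt_tailInv ht.1.le ht.2).le
  have hhigh : ∀ t ∈ Ioi T, min (ENNReal.ofReal b) (μ {ω | t < Z ω}) = μ {ω | t < Z ω} :=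
    fun t ht => min_eq_right (measure_lt_le_of_tailInv_lt hZ hb ht)
  calc ENNReal.ofReal T * ENNReal.ofReal b + ∫⁻ t in Ioi T, μ {ω | t < Z ω}
      = (∫⁻ t in Ioo 0 T, min (ENNReal.ofReal b) (μ {ω | t < Z ω}))
          + ∫⁻ t in Ioi T, min (ENNReal.ofReal b) (μ {ω | t < Z ω}) := by
        rw [setLIntegral_congr_fun measurableSet_Ioo hlow, setLIntegral_const, Real.volume_Ioo,
          sub_zero, mul_comm, setLIntegral_congr_fun measurableSet_Ioi hhigh]
    _ = ∫⁻ t in Ioo 0 T ∪ Ioi T, min (ENNReal.ofReal b) (μ {ω | t < Z ω}) :=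
        (lintegral_union measurableSet_Ioi
          (Ioc_disjoint_Ioi_same.mono_left Ioo_subset_Ioc_self)).symm
    _ ≤ ∫⁻ t in Ioi 0, min (ENNReal.ofReal b) (μ {ω | t < Z ω}) :=
        lintegral_mono_set (union_subset Ioo_subset_Ioi_self
          (Ioi_subset_Ioi (tailInv_nonneg b)))

theorem ofReal_intervalIntegral_tailInv (hZ : Measurable Z)
    (hfin : ∫⁻ ω, ENNReal.ofReal (Z ω) ∂μ ≠ ⊤) {b : ℝ} (hb : 0 ≤ b) :
    ENNReal.ofReal (∫ u in 0..b, tailInv μ Z u) =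
      ∫⁻ t in Ioi 0, min (ENNReal.ofReal b) (μ {ω | t < Z ω}) := by
  have hfinite : ∫⁻ u in Ioo 0 b, ENNReal.ofReal (tailInv μ Z u) < ⊤ := by
    rw [lintegral_tailInv hZ]
    refine lt_of_le_of_lt (lintegral_mono fun t => min_le_right _ _) ?_
    rw [← lintegral_ofReal_sub_eq_lintegral_meas_lt hZ 0]
    simpa using hfin.lt_top
  have hint : IntegrableOn (tailInv μ Z) (Ioo 0 b) :=
    ⟨(aemeasurable_restrict_of_antitoneOn measurableSet_Ioo
      ((antitoneOn_tailInv hZ).mono Ioo_subset_Ioi_self)).aestronglyMeasurable,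
      (hasFiniteIntegral_iff_ofReal (ae_of_all _ tailInv_nonneg)).2 hfinite⟩
  rw [intervalIntegral.integral_of_le hb, integral_Ioc_eq_integral_Ioo,
    ofReal_integral_eq_lintegral_ofReal hint (ae_of_all _ tailInv_nonneg), lintegral_tailInv hZ]

theorem iInf_truncation_le_intervalIntegral_tailInv (hZ : Measurable Z)
    (hfin : ∫⁻ ω, ENNReal.ofReal (Z ω) ∂μ ≠ ⊤) {b : ℝ} (hb : 0 ≤ b) :
    ⨅ T : ℝ, (ENNReal.ofReal T * ENNReal.ofReal b + ∫⁻ ω, ENNReal.ofReal (Z ω - T) ∂μ) ≤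
      ENNReal.ofReal (∫ u in 0..b, tailInv μ Z u) := by
  rcases hb.eq_or_lt with rfl | hb
  · calc ⨅ T : ℝ, (ENNReal.ofReal T * ENNReal.ofReal 0 + ∫⁻ ω, ENNReal.ofReal (Z ω - T) ∂μ)
        ≤ ⨅ n : ℕ, ∫⁻ ω, ENNReal.ofReal (Z ω - n) ∂μ := iInf_mono' fun n => ⟨n, by simp⟩
      _ = 0 := iInf_lintegral_ofReal_sub_natCast hZ hfin
      _ ≤ _ := bot_le
  · refine (iInf_le _ (tailInv μ Z b)).trans ?_
    rw [lintegral_ofReal_sub_eq_lintegral_meas_lt hZ, ofReal_intervalIntegral_tailInv hZ hfin hb.le]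
    exact truncation_le_lintegral_min hZ hb

end TailInverse

theorem tauC_le_beta_integral_general
    {S : Type*} [TopologicalSpace S] [MeasurableSpace S] [BorelSpace S]
    {Ω : Type*} [mΩ : MeasurableSpace Ω] (P : Measure Ω) [IsProbabilityMeasure P]
    (c : S → S → ℝ) (hstar : StarCond c)
    (X : Ω → S) (hX : Measurable X)
    (x₀ : S) (hXint : ∫⁻ x, ENNReal.ofReal (c x x₀) ∂(P.map X) < ⊤)
    (M : MeasurableSpace Ω) (hM : M ≤ mΩ)
    (κX : Ω → Measure S) (hκX : IsRCD P M X κX) :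
    (∀ x : S, tauC c P κX X ≤
      ENNReal.ofReal
        (2 * ∫ u in (0:ℝ)..(betaMix P κX X).toReal,
          tailInv P (fun ω => c (X ω) x) u)) ∧
    (∀ M₀ : ℝ, (∀ x y, c x y ≤ M₀) →
      tauC c P κX X ≤ 2 * ENNReal.ofReal M₀ * betaMix P κX X) := by
  have hc : ∀ x, Measurable fun y => c y x := fun x => (hstar.lowerSemicontinuous x).measurable
  have htrunc : ∀ x T, tauC c P κX X ≤
      2 * (ENNReal.ofReal T * betaMix P κX X + ∫⁻ ω, ENNReal.ofReal (c (X ω) x - T) ∂P) :=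
    fun x => tauC_le_truncation c (hc x) hX hκX hM
  have hκ := hκX.1
  -- `M` is a second `MeasurableSpace Ω` in context; once it is gone, instances resolve to `mΩ`.
  clear hκX hM M
  have hβ : ENNReal.ofReal (betaMix P κX X).toReal = betaMix P κX X :=
    ENNReal.ofReal_toReal (ne_top_of_le_ne_top one_ne_top (betaMix_le_one hκ hX))
  refine ⟨fun x => ?_, fun M₀ hM₀ => ?_⟩
  · have : IsProbabilityMeasure (P.map X) := Measure.isProbabilityMeasure_map hX.aemeasurable
    have hfin : ∫⁻ ω, ENNReal.ofReal (c (X ω) x) ∂P ≠ ⊤ := by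
      rw [← lintegral_map (hc x).ennreal_ofReal hX]
      exact (hstar.lintegral_lt_top hXint x).ne
    calc tauC c P κX X
        ≤ 2 * ⨅ T : ℝ, (ENNReal.ofReal T * ENNReal.ofReal (betaMix P κX X).toReal
            + ∫⁻ ω, ENNReal.ofReal (c (X ω) x - T) ∂P) := by
          rw [ENNReal.mul_iInf_of_ne two_ne_zero ofNat_ne_top, hβ]
          exact le_iInf (htrunc x)
      _ ≤ 2 * ENNReal.ofReal
            (∫ u in (0:ℝ)..(betaMix P κX X).toReal, tailInv P (fun ω => c (X ω) x) u) := by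
          gcongr
          exact iInf_truncation_le_intervalIntegral_tailInv ((hc x).comp hX) hfin toReal_nonneg
      _ = _ := by rw [ENNReal.ofReal_mul zero_le_two, ENNReal.ofReal_ofNat]
  · have htail : ∫⁻ ω, ENNReal.ofReal (c (X ω) x₀ - M₀) ∂P = 0 := by
      simp [ENNReal.ofReal_of_nonpos (sub_nonpos.2 (hM₀ _ x₀))]
    simpa [htail, mul_assoc] using htrunc x₀ M₀

/-- **Comparison of `τ_c` with the `β`-mixing coefficient**:
`τ_c(ℳ, X) ≤ 2 ∫₀^{β(ℳ,σ(X))} Q_{c(X,x)}(u) du` for every `x`; in particular, if `c`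
is bounded by `M₀`, then `τ_c(ℳ, X) ≤ 2 M₀ β(ℳ, σ(X))`. -/
theorem tauC_le_beta_integral
    {S : Type*} [TopologicalSpace S] [PolishSpace S] [MeasurableSpace S] [BorelSpace S]
    {Ω : Type*} [mΩ : MeasurableSpace Ω] (P : Measure Ω) [IsProbabilityMeasure P]
    (c : S → S → ℝ) (hc0 : ∀ x y, 0 ≤ c x y) (hstar : StarCond c)
    (X : Ω → S) (hX : Measurable X)
    (x₀ : S) (hXint : ∫⁻ x, ENNReal.ofReal (c x x₀) ∂(P.map X) < ⊤)
    (M : MeasurableSpace Ω) (hM : M ≤ mΩ)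
    (κX : Ω → Measure S) (hκX : IsRCD P M X κX) :
    (∀ x : S, tauC c P κX X ≤
      ENNReal.ofReal
        (2 * ∫ u in (0:ℝ)..(betaMix P κX X).toReal,
          tailInv P (fun ω => c (X ω) x) u)) ∧
    (∀ M₀ : ℝ, (∀ x y, c x y ≤ M₀) →
      tauC c P κX X ≤ 2 * ENNReal.ofReal M₀ * betaMix P κX X) :=
  tauC_le_beta_integral_general (mΩ := mΩ) P c hstar X hX x₀ hXint M hM κX hκX

end
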